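/- arXiv:2105.14529 — 3 statements merged into one kernel-verified Lean document; each statement's English description precedes it below -/
import Mathlib

section
/- Strong data-processing inequality for total variation: for a Markov kernel Q from X to Z and probability measures P_0, P_1 on X with pushforwards M_0, M_1 on Z (M_i(A) = ∫ Q(A|x) dP_i(x)), it holds that d_TV(M_0, M_1) ≤ α_TV(Q) · d_TV(P_0, P_1), where α_TV(Q) = sup_{x,x'} d_TV(Q(·|x), Q(·|x')) is the Dobrushin coefficient. -/
/-! For measurable `A`, the function `g x = Q(A|x)` has oscillation at most `α = α_TV(Q)`, and
`M₀(A) - M₁(A) = ∫ g dP₀ - ∫ g dP₁`. Shifting `g` by its infimum into `[0, α]`, the layer-cake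
formula writes this difference as `∫₀^α (P₀{g > t} - P₁{g > t}) dt ≤ α · d_TV(P₀, P₁)`. -/

open MeasureTheory ProbabilityTheory

/-- Total variation distance between two measures. -/
noncomputable def tvDist {Z : Type*} [MeasurableSpace Z]
    (P Q : Measure Z) : ℝ :=
  ⨆ A : {A : Set Z // MeasurableSet A}, |(P A.1).toReal - (Q A.1).toReal|

/-- Dobrushin coefficient of a kernel. -/
noncomputable def dobrushin {X Z : Type*} [MeasurableSpace X] [MeasurableSpace Z]
    (Q : Kernel X Z) : ℝ :=
  ⨆ p : X × X, tvDist (Q p.1) (Q p.2)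

open Set ENNReal

section tvDist

variable {X : Type*} [MeasurableSpace X]

lemma tvDist_nonneg (P₀ P₁ : Measure X) : 0 ≤ tvDist P₀ P₁ :=
  Real.iSup_nonneg fun _ ↦ abs_nonneg _

lemma tvDist_comm (P₀ P₁ : Measure X) : tvDist P₀ P₁ = tvDist P₁ P₀ := by
  simp only [tvDist, abs_sub_comm]

variable (P₀ P₁ : Measure X) [IsProbabilityMeasure P₀] [IsProbabilityMeasure P₁]

lemma abs_sub_le_one (A : Set X) : |(P₀ A).toReal - (P₁ A).toReal| ≤ 1 := by
  simpa only [measureReal_def, sub_zero] using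
    abs_sub_le_of_le_of_le measureReal_nonneg measureReal_le_one measureReal_nonneg
      measureReal_le_one

lemma tvDist_le_one : tvDist P₀ P₁ ≤ 1 :=
  Real.iSup_le (fun A ↦ abs_sub_le_one P₀ P₁ A.1) zero_le_one

lemma abs_sub_le_tvDist {A : Set X} (hA : MeasurableSet A) :
    |(P₀ A).toReal - (P₁ A).toReal| ≤ tvDist P₀ P₁ :=
  le_ciSup (f := fun A : {A : Set X // MeasurableSet A} ↦ |(P₀ A.1).toReal - (P₁ A.1).toReal|)
    ⟨1, by rintro _ ⟨A, rfl⟩; exact abs_sub_le_one P₀ P₁ A.1⟩ ⟨A, hA⟩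

lemma measure_le_add_tvDist {A : Set X} (hA : MeasurableSet A) :
    P₀ A ≤ P₁ A + ENNReal.ofReal (tvDist P₀ P₁) := by
  have h := (le_abs_self _).trans (abs_sub_le_tvDist P₀ P₁ hA)
  rw [← ofReal_toReal (measure_ne_top P₀ A), ← ofReal_toReal (measure_ne_top P₁ A),
    ← ofReal_add toReal_nonneg (tvDist_nonneg P₀ P₁)]
  exact ofReal_le_ofReal (by linarith)

lemma lintegral_ofReal_le_add_mul_tvDist {h : X → ℝ} {c : ℝ} (hm : Measurable h)
    (h_nonneg : ∀ x, 0 ≤ h x) (h_le : ∀ x, h x ≤ c) :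
    ∫⁻ x, .ofReal (h x) ∂P₀ ≤ ∫⁻ x, .ofReal (h x) ∂P₁ + .ofReal (c * tvDist P₀ P₁) := by
  set tv := tvDist P₀ P₁
  have h_ae : ∀ P : Measure X, 0 ≤ᵐ[P] h := fun _ ↦ .of_forall h_nonneg
  rw [lintegral_eq_lintegral_meas_lt P₀ (h_ae P₀) hm.aemeasurable,
    lintegral_eq_lintegral_meas_lt P₁ (h_ae P₁) hm.aemeasurable]
  have h_level : ∀ t ∈ Ioi (0 : ℝ),
      P₀ {x | t < h x} ≤ P₁ {x | t < h x} + (Ioc 0 c).indicator (fun _ ↦ .ofReal tv) t := by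
    intro t ht
    by_cases htc : t ≤ c
    · rw [indicator_of_mem (show t ∈ Ioc 0 c from ⟨ht, htc⟩)]
      exact measure_le_add_tvDist P₀ P₁ (measurableSet_lt measurable_const hm)
    · have h_empty : {x | t < h x} = ∅ :=
        eq_empty_of_forall_notMem fun x hx ↦ htc ((le_of_lt hx).trans (h_le x))
      simp [h_empty]
  calc ∫⁻ t in Ioi 0, P₀ {x | t < h x}
      ≤ ∫⁻ t in Ioi 0, (P₁ {x | t < h x} + (Ioc 0 c).indicator (fun _ ↦ .ofReal tv) t) :=
        setLIntegral_mono' measurableSet_Ioi h_level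
    _ = (∫⁻ t in Ioi 0, P₁ {x | t < h x})
          + ∫⁻ t in Ioi 0, (Ioc 0 c).indicator (fun _ ↦ .ofReal tv) t :=
        lintegral_add_right _ (measurable_const.indicator measurableSet_Ioc)
    _ ≤ (∫⁻ t in Ioi 0, P₁ {x | t < h x}) + .ofReal (c * tv) := by
        gcongr
        rw [lintegral_indicator measurableSet_Ioc, setLIntegral_const,
          Measure.restrict_apply measurableSet_Ioc,
          inter_eq_self_of_subset_left Ioc_subset_Ioi_self, Real.volume_Ioc, sub_zero,
          ← ofReal_mul (tvDist_nonneg P₀ P₁), mul_comm]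

lemma integral_le_add_mul_tvDist {f : X → ℝ} {a c : ℝ} (hm : Measurable f)
    (ha : ∀ x, a ≤ f x) (hc : ∀ x, f x ≤ a + c) :
    ∫ x, f x ∂P₀ ≤ ∫ x, f x ∂P₁ + c * tvDist P₀ P₁ := by
  have h_int : ∀ (P : Measure X) [IsProbabilityMeasure P], Integrable f P := fun _ _ ↦
    .of_bound hm.aestronglyMeasurable _ (.of_forall fun x ↦ abs_le_max_abs_abs (ha x) (hc x))
  have h_int_shift : ∀ (P : Measure X) [IsProbabilityMeasure P], Integrable (fun x ↦ f x - a) P :=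
    fun P _ ↦ (h_int P).sub (integrable_const a)
  have h_shift : ∀ (P : Measure X) [IsProbabilityMeasure P], ∫ x, f x - a ∂P = ∫ x, f x ∂P - a :=
    fun P _ ↦ by simp [integral_sub (h_int P) (integrable_const a)]
  have h_nonneg : ∀ x, 0 ≤ f x - a := fun x ↦ sub_nonneg.2 (ha x)
  have h_ae : ∀ P : Measure X, 0 ≤ᵐ[P] fun x ↦ f x - a := fun _ ↦ .of_forall h_nonneg
  have hX : Nonempty X := nonempty_of_isProbabilityMeasure P₀
  have hc_nonneg : 0 ≤ c := by linarith [ha hX.some, hc hX.some]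
  have h_int_nonneg : 0 ≤ ∫ x, f x - a ∂P₁ := integral_nonneg h_nonneg
  have h_mul_nonneg : 0 ≤ c * tvDist P₀ P₁ := mul_nonneg hc_nonneg (tvDist_nonneg P₀ P₁)
  have h_shifted : ∫ x, f x - a ∂P₀ ≤ ∫ x, f x - a ∂P₁ + c * tvDist P₀ P₁ := by
    rw [← ofReal_le_ofReal_iff (add_nonneg h_int_nonneg h_mul_nonneg),
      ofReal_add h_int_nonneg h_mul_nonneg,
      ofReal_integral_eq_lintegral_ofReal (h_int_shift P₀) (h_ae P₀),
      ofReal_integral_eq_lintegral_ofReal (h_int_shift P₁) (h_ae P₁)]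
    exact lintegral_ofReal_le_add_mul_tvDist P₀ P₁ (hm.sub measurable_const) h_nonneg
      fun x ↦ by linarith [hc x]
  rw [h_shift, h_shift] at h_shifted
  linarith

lemma integral_sub_integral_le_mul_tvDist {f : X → ℝ} {c : ℝ} (hm : Measurable f)
    (h_osc : ∀ x y, f x - f y ≤ c) :
    ∫ x, f x ∂P₀ - ∫ x, f x ∂P₁ ≤ c * tvDist P₀ P₁ := by
  have hX : Nonempty X := nonempty_of_isProbabilityMeasure P₀
  have h_bdd : BddBelow (range f) :=
    ⟨f hX.some - c, by rintro _ ⟨x, rfl⟩; linarith [h_osc hX.some x]⟩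
  have h_le_inf_add : ∀ x, f x ≤ (⨅ y, f y) + c := fun x ↦
    sub_le_iff_le_add.1 (le_ciInf fun y ↦ sub_le_comm.1 (h_osc x y))
  linarith [integral_le_add_mul_tvDist P₀ P₁ hm (ciInf_le h_bdd) h_le_inf_add]

end tvDist

section dobrushin

variable {X Z : Type*} [MeasurableSpace X] [MeasurableSpace Z]

lemma tvDist_le_dobrushin (Q : Kernel X Z) [IsMarkovKernel Q] (x y : X) :
    tvDist (Q x) (Q y) ≤ dobrushin Q :=
  le_ciSup (f := fun p : X × X ↦ tvDist (Q p.1) (Q p.2))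
    ⟨1, by rintro _ ⟨p, rfl⟩; exact tvDist_le_one _ _⟩ (x, y)

lemma toReal_bind_apply (Q : Kernel X Z) [IsFiniteKernel Q] (P : Measure X) {A : Set Z}
    (hA : MeasurableSet A) : ((P.bind Q) A).toReal = ∫ x, (Q x A).toReal ∂P := by
  rw [Measure.bind_apply hA Q.measurable.aemeasurable,
    integral_toReal (Q.measurable_coe hA).aemeasurable (.of_forall fun x ↦ measure_lt_top _ _)]

lemma toReal_bind_sub_le_dobrushin_mul_tvDist (Q : Kernel X Z) [IsMarkovKernel Q]
    (P₀ P₁ : Measure X) [IsProbabilityMeasure P₀] [IsProbabilityMeasure P₁] {A : Set Z}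
    (hA : MeasurableSet A) :
    ((P₀.bind Q) A).toReal - ((P₁.bind Q) A).toReal ≤ dobrushin Q * tvDist P₀ P₁ := by
  rw [toReal_bind_apply Q P₀ hA, toReal_bind_apply Q P₁ hA]
  exact integral_sub_integral_le_mul_tvDist P₀ P₁ (Q.measurable_coe hA).ennreal_toReal
    fun x y ↦ (le_abs_self _).trans
      ((abs_sub_le_tvDist (Q x) (Q y) hA).trans (tvDist_le_dobrushin Q x y))

end dobrushin

/-- Strong data-processing inequality for total variation. -/
theorem stmt2 {X Z : Type*} [MeasurableSpace X] [MeasurableSpace Z]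
    (Q : Kernel X Z) [IsMarkovKernel Q]
    (P₀ P₁ : Measure X) [IsProbabilityMeasure P₀] [IsProbabilityMeasure P₁] :
    tvDist (P₀.bind Q) (P₁.bind Q) ≤ dobrushin Q * tvDist P₀ P₁ := by
  have h_nonneg : 0 ≤ dobrushin Q * tvDist P₀ P₁ :=
    mul_nonneg (Real.iSup_nonneg fun _ ↦ tvDist_nonneg _ _) (tvDist_nonneg P₀ P₁)
  refine Real.iSup_le (fun ⟨A, hA⟩ ↦ abs_sub_le_iff.2 ⟨?_, ?_⟩) h_nonneg
  · exact toReal_bind_sub_le_dobrushin_mul_tvDist Q P₀ P₁ hA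
  · rw [tvDist_comm P₀ P₁]
    exact toReal_bind_sub_le_dobrushin_mul_tvDist Q P₁ P₀ hA
end

section
/- Let S_i, S_j have uniform label distribution over a finite label set Y and suppose d_TV(S_i(z|y), S_j(z|y)) ≤ κ for all y. Let Ω* be a region on which c := inf_{z∈Ω*} Σ_y S_j(z|y) > 0 (densities intersect). Then ∫_{Ω*} |S_i(y|z) − S_j(y|z)| dz ≤ C⁺ κ with C⁺ = (1 + |Y|)/c, where S(y|z) = S(z|y)S(y)/Σ_{y'} S(z|y')S(y') are the posterior label probabilities. -/
open MeasureTheory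

theorem stmt7 {Z Y : Type*} [MeasurableSpace Z] [Fintype Y] [Nonempty Y]
    (μ : Measure Z)
    (si sj : Z → Y → ℝ)  -- class-conditional densities w.r.t. μ
    (hsi_nonneg : ∀ z y, 0 ≤ si z y) (hsj_nonneg : ∀ z y, 0 ≤ sj z y)
    (hsi_prob : ∀ y, ∫ z, si z y ∂μ = 1) (hsj_prob : ∀ y, ∫ z, sj z y ∂μ = 1)
    (κ : ℝ) (hκ : ∀ y, ∫ z, |si z y - sj z y| ∂μ ≤ κ)
    (Ω : Set Z) (hΩ : MeasurableSet Ω)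
    (c : ℝ) (hc : 0 < c) (hlb : ∀ z ∈ Ω, c ≤ ∑ y : Y, sj z y)
    -- posteriors under uniform label priors S(y|z) = S(z|y)/Σ_{y'} S(z|y')
    (postI postJ : Z → Y → ℝ)
    (hpostI : ∀ z y, postI z y = si z y / ∑ y' : Y, si z y')
    (hpostJ : ∀ z y, postJ z y = sj z y / ∑ y' : Y, sj z y') :
    ∀ y : Y, ∫ z in Ω, |postI z y - postJ z y| ∂μ ≤
      ((1 + (Fintype.card Y : ℝ)) / c) * κ := by
  intro y
  -- integrability of the densities
  have hki : ∀ y, Integrable (fun z => si z y) μ := by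
    intro y; by_contra h
    have := hsi_prob y
    rw [integral_undef h] at this
    norm_num at this
  have hkj : ∀ y, Integrable (fun z => sj z y) μ := by
    intro y; by_contra h
    have := hsj_prob y
    rw [integral_undef h] at this
    norm_num at this
  have hdiff_int : ∀ y, Integrable (fun z => |si z y - sj z y|) μ :=
    fun y => ((hki y).sub (hkj y)).abs
  -- dominating function
  set D : Z → ℝ := fun z => |si z y - sj z y| + ∑ y' : Y, |si z y' - sj z y'| with hD
  have hD_int : Integrable D μ :=
    (hdiff_int y).add (integrable_finset_sum _ fun y' _ => hdiff_int y')
  -- pointwise bound on Ω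
  have key : ∀ z ∈ Ω, |postI z y - postJ z y| ≤ D z / c := by
    intro z hz
    rw [hpostI, hpostJ]
    have hSj_c : c ≤ ∑ y' : Y, sj z y' := hlb z hz
    have hSj_pos : (0:ℝ) < ∑ y' : Y, sj z y' := lt_of_lt_of_le hc hSj_c
    have ha : 0 ≤ si z y := hsi_nonneg z y
    have hb0 : 0 ≤ sj z y := hsj_nonneg z y
    have hbS : sj z y ≤ ∑ y' : Y, sj z y' :=
      Finset.single_le_sum (fun y' _ => hsj_nonneg z y') (Finset.mem_univ y)
    have haS : si z y ≤ ∑ y' : Y, si z y' :=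
      Finset.single_le_sum (fun y' _ => hsi_nonneg z y') (Finset.mem_univ y)
    have hSi0 : (0:ℝ) ≤ ∑ y' : Y, si z y' :=
      Finset.sum_nonneg fun y' _ => hsi_nonneg z y'
    have habs : |(∑ y' : Y, si z y') - ∑ y' : Y, sj z y'| ≤ ∑ y' : Y, |si z y' - sj z y'| := by
      rw [← Finset.sum_sub_distrib]
      exact Finset.abs_sum_le_sum_abs _ _
    have hsum_nn : (0:ℝ) ≤ ∑ y' : Y, |si z y' - sj z y'| :=
      Finset.sum_nonneg fun y' _ => abs_nonneg _
    rcases eq_or_lt_of_le hSi0 with h0 | hSipos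
    · -- degenerate case: Σ si z = 0, hence si z y = 0
      have hay : si z y = 0 := by
        have := (Finset.sum_eq_zero_iff_of_nonneg (fun y' _ => hsi_nonneg z y')).mp h0.symm
        exact this y (Finset.mem_univ y)
      rw [hay, ← h0, zero_div, zero_sub, abs_neg, abs_of_nonneg (div_nonneg hb0 hSj_pos.le)]
      have h1 : sj z y / (∑ y' : Y, sj z y') ≤ sj z y / c :=
        div_le_div₀ hb0 le_rfl hc hSj_c
      refine h1.trans ?_
      have hd : |si z y - sj z y| = sj z y := by rw [hay]; simp [abs_of_nonneg hb0]
      have hle : sj z y ≤ D z := by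
        simp only [hD]
        nlinarith [hsum_nn]
      gcongr
    · -- main case: Σ si z > 0
      have hid : si z y / (∑ y' : Y, si z y') - sj z y / (∑ y' : Y, sj z y')
          = (si z y - sj z y) / (∑ y' : Y, sj z y')
            + (si z y / (∑ y' : Y, si z y'))
              * (((∑ y' : Y, sj z y') - ∑ y' : Y, si z y') / (∑ y' : Y, sj z y')) := by
        field_simp
        ring
      rw [hid]
      have hA : |(si z y - sj z y) / (∑ y' : Y, sj z y')| ≤ |si z y - sj z y| / c := by
        rw [abs_div, abs_of_pos hSj_pos]
        exact div_le_div₀ (abs_nonneg _) le_rfl hc hSj_c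
      have hratio : si z y / (∑ y' : Y, si z y') ≤ 1 := (div_le_one hSipos).mpr haS
      have hratio0 : 0 ≤ si z y / (∑ y' : Y, si z y') := div_nonneg ha hSi0
      have hB : |(si z y / (∑ y' : Y, si z y'))
            * (((∑ y' : Y, sj z y') - ∑ y' : Y, si z y') / (∑ y' : Y, sj z y'))|
          ≤ (∑ y' : Y, |si z y' - sj z y'|) / c := by
        rw [abs_mul, abs_of_nonneg hratio0, abs_div, abs_of_pos hSj_pos]
        have h2 : |(∑ y' : Y, sj z y') - ∑ y' : Y, si z y'| / (∑ y' : Y, sj z y')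
            ≤ (∑ y' : Y, |si z y' - sj z y'|) / c := by
          apply div_le_div₀ hsum_nn _ hc hSj_c
          rw [abs_sub_comm]; exact habs
        calc _ ≤ 1 * (|(∑ y' : Y, sj z y') - ∑ y' : Y, si z y'| / (∑ y' : Y, sj z y')) :=
              mul_le_mul_of_nonneg_right hratio (div_nonneg (abs_nonneg _) hSj_pos.le)
          _ = _ := one_mul _
          _ ≤ _ := h2
      calc |_ + _| ≤ _ + _ := abs_add_le _ _
        _ ≤ |si z y - sj z y| / c + (∑ y' : Y, |si z y' - sj z y'|) / c := add_le_add hA hB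
        _ = D z / c := by rw [hD, ← add_div]
  -- measurability of the integrand
  have hm : AEStronglyMeasurable (fun z => |postI z y - postJ z y|) (μ.restrict Ω) := by
    have h1 : AEMeasurable (fun z => si z y / ∑ y' : Y, si z y') μ :=
      ((hki y).aemeasurable).div (Finset.aemeasurable_fun_sum _ fun y' _ => (hki y').aemeasurable)
    have h2 : AEMeasurable (fun z => sj z y / ∑ y' : Y, sj z y') μ :=
      ((hkj y).aemeasurable).div (Finset.aemeasurable_fun_sum _ fun y' _ => (hkj y').aemeasurable)
    have h3 : AEMeasurable (fun z => |postI z y - postJ z y|) μ := by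
      simp only [hpostI, hpostJ]
      exact measurable_abs.comp_aemeasurable (h1.sub h2)
    exact h3.restrict.aestronglyMeasurable
  -- integrability of the integrand on Ω
  have hInt : IntegrableOn (fun z => |postI z y - postJ z y|) Ω μ := by
    refine Integrable.mono ((hD_int.div_const c).restrict (s := Ω)) hm ?_
    filter_upwards [ae_restrict_mem hΩ] with z hz
    rw [Real.norm_eq_abs, Real.norm_eq_abs, abs_abs]
    exact (key z hz).trans (le_abs_self _)
  -- bounds on the integrals of the differences
  have hκ' : ∀ y', ∫ z in Ω, |si z y' - sj z y'| ∂μ ≤ κ := fun y' =>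
    (setIntegral_le_integral (hdiff_int y') (ae_of_all _ fun z => abs_nonneg _)).trans (hκ y')
  have hDint_le : ∫ z in Ω, D z ∂μ ≤ (1 + (Fintype.card Y : ℝ)) * κ := by
    have hsplit : ∫ z in Ω, D z ∂μ
        = (∫ z in Ω, |si z y - sj z y| ∂μ)
          + ∑ y' : Y, ∫ z in Ω, |si z y' - sj z y'| ∂μ := by
      rw [hD]
      rw [integral_add ((hdiff_int y).restrict)
        ((integrable_finset_sum _ fun y' _ => hdiff_int y').restrict)]
      congr 1
      exact integral_finset_sum _ fun y' _ => (hdiff_int y').restrict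
    rw [hsplit]
    have hsum : ∑ y' : Y, ∫ z in Ω, |si z y' - sj z y'| ∂μ ≤ (Fintype.card Y : ℝ) * κ := by
      calc ∑ y' : Y, ∫ z in Ω, |si z y' - sj z y'| ∂μ ≤ ∑ _y' : Y, κ :=
            Finset.sum_le_sum fun y' _ => hκ' y'
        _ = (Fintype.card Y : ℝ) * κ := by
            rw [Finset.sum_const, Finset.card_univ, nsmul_eq_mul]
    nlinarith [hκ' y]
  -- put it together
  calc ∫ z in Ω, |postI z y - postJ z y| ∂μ ≤ ∫ z in Ω, D z / c ∂μ :=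
        setIntegral_mono_on hInt ((hD_int.div_const c).restrict) hΩ key
    _ = (∫ z in Ω, D z ∂μ) / c := integral_div c _
    _ ≤ ((1 + (Fintype.card Y : ℝ)) * κ) / c := by
        gcongr
    _ = ((1 + (Fintype.card Y : ℝ)) / c) * κ := by ring
end

section
/- Counter-example to sufficiency of conditional invariance: define φ : [0,5] → R by φ(x) = x for 0 ≤ x ≤ 2, φ(x) = x − 2 for 3 ≤ x ≤ 4, and φ(x) = 5 − x for 4 < x ≤ 5, and h(z) = −sign(z − 1). Let S have class y = +1 uniform on [0,1] and y = −1 uniform on [1,2] (so h∘φ achieves zero 0-1 error on S). Then for the shifted test distribution T where the class-conditionals are translated by ε ∈ (0, 1/2) within the pieces (with d_TV(T(x|y), S(x|y)) = ε), the expected 0-1 loss of h∘φ on T equals ε. -/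
open MeasureTheory

/-- The piecewise embedding of the counter-example. -/
noncomputable def φce (x : ℝ) : ℝ :=
  if x ≤ 2 then x else if x ≤ 4 then x - 2 else 5 - x

/-- The classifier `h(z) = -sign(z - 1)` (with `sign t = 1` iff `t > 0`). -/
noncomputable def hce (z : ℝ) : ℝ := if z - 1 > 0 then -1 else 1

/-- The 0-1 loss. -/
noncomputable def loss01 (yhat y : ℝ) : ℝ := if yhat = y then 0 else 1


/-!
On `[0, 2]` the classifier `hce ∘ φce` errs on label `1` exactly to the right of `1`, and on
`(3, 5]` it errs on label `-1` exactly to the right of `4`, where the decreasing piece `5 - x` of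
`φce` folds back below the threshold. Each 0-1 risk is therefore the length of the part of an
interval beyond a threshold: zero for the training intervals, `ε` for the shifted ones.
For the total variation distance, a measurable set sees a discrepancy of at most the length of one
of the two slivers of length `ε` where an interval and its shift differ, and the right-hand sliver
`(b, b + ε]` attains it.
-/

open Set
open scoped ENNReal

section TotalVariation

variable {Z : Type*} [MeasurableSpace Z] {P Q : Measure Z} {δ : ℝ}

lemma tvDist_le_of_forall (h : ∀ s, MeasurableSet s → |P.real s - Q.real s| ≤ δ) :
    tvDist P Q ≤ δ :=
  haveI : Nonempty {A : Set Z // MeasurableSet A} := ⟨⟨∅, .empty⟩⟩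
  ciSup_le fun A => h A.1 A.2

lemma abs_measureReal_sub_le_tvDist (h : ∀ s, MeasurableSet s → |P.real s - Q.real s| ≤ δ)
    {s : Set Z} (hs : MeasurableSet s) : |P.real s - Q.real s| ≤ tvDist P Q :=
  le_ciSup (f := fun A : {A : Set Z // MeasurableSet A} => |P.real A.1 - Q.real A.1|)
    ⟨δ, forall_mem_range.mpr fun A => h A.1 A.2⟩ ⟨s, hs⟩

variable {μ : Measure Z} {A B : Set Z}

lemma measureReal_inter_le_add_sdiff (hA : μ A ≠ ∞) (s : Set Z) :
    μ.real (s ∩ A) ≤ μ.real (s ∩ A ∩ B) + μ.real (A \ B) :=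
  calc μ.real (s ∩ A)
      ≤ μ.real (s ∩ A ∩ B ∪ A \ B) :=
        measureReal_mono (fun x hx => by by_cases hB : x ∈ B <;> simp_all)
          (ne_top_of_le_ne_top hA (measure_mono (union_subset (fun x hx => hx.1.2) sdiff_subset)))
    _ ≤ μ.real (s ∩ A ∩ B) + μ.real (A \ B) := measureReal_union_le _ _

lemma abs_measureReal_restrict_sub_le (hA : μ A ≠ ∞) (hB : μ B ≠ ∞)
    (hAB : μ.real (A \ B) ≤ δ) (hBA : μ.real (B \ A) ≤ δ) {s : Set Z}
    (hs : MeasurableSet s) :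
    |(μ.restrict A).real s - (μ.restrict B).real s| ≤ δ := by
  rw [measureReal_restrict_apply hs, measureReal_restrict_apply hs, abs_sub_le_iff]
  have hsAB : μ.real (s ∩ A ∩ B) ≤ μ.real (s ∩ B) :=
    measureReal_mono (fun x hx => ⟨hx.1.1, hx.2⟩) (by finiteness)
  have hsBA : μ.real (s ∩ B ∩ A) ≤ μ.real (s ∩ A) :=
    measureReal_mono (fun x hx => ⟨hx.1.1, hx.2⟩) (by finiteness)
  constructor <;> linarith [measureReal_inter_le_add_sdiff (B := B) hA s,
    measureReal_inter_le_add_sdiff (B := A) hB s]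

end TotalVariation

lemma tvDist_restrict_Icc_add {a b ε : ℝ} (hε : 0 ≤ ε) (hεab : ε ≤ b - a) :
    tvDist (volume.restrict (Icc (a + ε) (b + ε))) (volume.restrict (Icc a b)) = ε := by
  have hright : volume.real (Icc (a + ε) (b + ε) \ Icc a b) ≤ ε :=
    calc volume.real (Icc (a + ε) (b + ε) \ Icc a b)
        ≤ volume.real (Ioc b (b + ε)) :=
          measureReal_mono (fun x ⟨⟨_, hxb⟩, hx⟩ => ⟨by grind, hxb⟩) (by simp)
      _ = ε := by simp [Real.volume_real_Ioc, hε]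
  have hleft : volume.real (Icc a b \ Icc (a + ε) (b + ε)) ≤ ε :=
    calc volume.real (Icc a b \ Icc (a + ε) (b + ε))
        ≤ volume.real (Ico a (a + ε)) :=
          measureReal_mono (fun x ⟨⟨hax, _⟩, hx⟩ => ⟨hax, by grind⟩) (by simp)
      _ = ε := by simp [Real.volume_real_Ico, hε]
  have hbound := fun s => abs_measureReal_restrict_sub_le (s := s) (μ := volume)
    (by simp) (by simp) hright hleft
  refine le_antisymm (tvDist_le_of_forall hbound) ?_
  refine le_of_eq_of_le ?_
    (abs_measureReal_sub_le_tvDist hbound (measurableSet_Ioc (a := b) (b := b + ε)))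
  rw [measureReal_restrict_apply measurableSet_Ioc, measureReal_restrict_apply measurableSet_Ioc,
    inter_eq_left.mpr (Ioc_subset_Icc_self.trans (Icc_subset_Icc (by linarith) le_rfl)),
    (disjoint_left.mpr fun x hx hx' => hx.1.not_ge hx'.2).inter_eq]
  simp [Real.volume_real_Ioc, hε, abs_of_nonneg hε]

lemma integral_Icc_eq_of_eqOn_indicator_Ioi {f : ℝ → ℝ} {a b c : ℝ}
    (hf : EqOn f ((Ioi c).indicator 1) (Ioc a b)) :
    ∫ x in Icc a b, f x = max (b - max a c) 0 := by
  rw [integral_Icc_eq_integral_Ioc, setIntegral_congr_fun measurableSet_Ioc hf,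
    integral_indicator_one measurableSet_Ioi, measureReal_restrict_apply measurableSet_Ioi,
    inter_comm, Ioc_inter_Ioi, Real.volume_real_Ioc]

lemma loss01_hce_one (z : ℝ) : loss01 (hce z) 1 = (Ioi 1).indicator 1 z := by
  by_cases hz : 1 < z <;> norm_num [loss01, hce, indicator, hz]

lemma loss01_hce_neg_one (z : ℝ) : loss01 (hce z) (-1) = (Iic 1).indicator 1 z := by
  by_cases hz : z ≤ 1 <;> norm_num [loss01, hce, indicator, hz]

lemma eqOn_loss01_hce_φce_one :
    EqOn (fun x => loss01 (hce (φce x)) 1) ((Ioi 1).indicator 1) (Iic 2) := by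
  intro x hx
  simp only [loss01_hce_one, φce, if_pos (show x ≤ 2 from hx)]

-- Not on `Ici 3`: `φce 3 = 1` is classified `1`, an error on a null set only.
lemma eqOn_loss01_hce_φce_neg_one :
    EqOn (fun x => loss01 (hce (φce x)) (-1)) ((Ioi 4).indicator 1) (Ioi 3) := by
  intro x (hx : 3 < x)
  by_cases hx4 : x ≤ 4
  · have hx4' : x ∉ Ioi 4 := not_lt.mpr hx4
    simp [loss01_hce_neg_one, φce, indicator, hx4, hx4', show ¬ x ≤ 2 by linarith,
      show ¬ x - 2 ≤ 1 by linarith]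
  · simp [loss01_hce_neg_one, φce, indicator, hx4, show ¬ x ≤ 2 by linarith,
      show 5 - x ≤ 1 by linarith, lt_of_not_ge hx4]

/-- Counter-example: conditional invariance with zero source error is not
sufficient; an `ε`-shift of the class-conditionals yields test error `ε`. -/
theorem stmt16 (ε : ℝ) (hε0 : 0 < ε) (hε1 : ε < 1 / 2) :
    -- zero 0-1 error on the training environment
    (∫ x in Set.Icc (0:ℝ) 1, loss01 (hce (φce x)) 1) = 0 ∧
    (∫ x in Set.Icc (3:ℝ) 4, loss01 (hce (φce x)) (-1)) = 0 ∧
    -- the shifted test class-conditionals are at TV distance ε from training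
    tvDist (volume.restrict (Set.Icc ε (1 + ε))) (volume.restrict (Set.Icc (0:ℝ) 1)) = ε ∧
    tvDist (volume.restrict (Set.Icc (3 + ε) (4 + ε))) (volume.restrict (Set.Icc (3:ℝ) 4)) = ε ∧
    -- the expected 0-1 loss on each shifted test class-conditional equals ε
    (∫ x in Set.Icc ε (1 + ε), loss01 (hce (φce x)) 1) = ε ∧
    (∫ x in Set.Icc (3 + ε) (4 + ε), loss01 (hce (φce x)) (-1)) = ε := by
  have hε1' : ε ≤ 1 := by linarith
  have hpos : ∀ {a b : ℝ}, b ≤ 2 →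
      EqOn (fun x => loss01 (hce (φce x)) 1) ((Ioi 1).indicator 1) (Ioc a b) :=
    fun hb => eqOn_loss01_hce_φce_one.mono fun x hx => hx.2.trans hb
  have hneg : ∀ {a b : ℝ}, 3 ≤ a →
      EqOn (fun x => loss01 (hce (φce x)) (-1)) ((Ioi 4).indicator 1) (Ioc a b) :=
    fun ha => eqOn_loss01_hce_φce_neg_one.mono fun x hx => ha.trans_lt hx.1
  refine ⟨?_, ?_, ?_, ?_, ?_, ?_⟩
  · rw [integral_Icc_eq_of_eqOn_indicator_Ioi (hpos (by norm_num))]; norm_num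
  · rw [integral_Icc_eq_of_eqOn_indicator_Ioi (hneg le_rfl)]; norm_num
  · simpa using tvDist_restrict_Icc_add (a := 0) (b := 1) hε0.le (by linarith)
  · simpa using tvDist_restrict_Icc_add (a := 3) (b := 4) hε0.le (by linarith)
  · rw [integral_Icc_eq_of_eqOn_indicator_Ioi (hpos (by linarith)), max_eq_right hε1']
    simp [hε0.le]
  · rw [integral_Icc_eq_of_eqOn_indicator_Ioi (hneg (by linarith)),
      max_eq_right (show 3 + ε ≤ 4 by linarith)]
    simp [hε0.le]
end
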